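/- For every tree T and every pair of permutations σ, τ ∈ S_T (i.e. φ(σ) = φ(τ) = T), the descent sets coincide: D_σ = D_τ. -/

import Mathlib

/-!
If `m` is the minimum of `I = A · m · B`, then `m` creates a descent at position `|A|` (when `A` is
nonempty) and none at `|A| + 1`, so `D(I) = D(A) ∪ {|A|} ∪ (|A| + 1 + D(B))`. As `|A|` is the number
of nodes of `φ(A)`, induction along the recursion of `φ` shows that `D(I)` is a function
`treeDescents` of the tree `φ(I)` alone.
-/

/-- The minimum of `a :: l` (computed by folding `min`) is a member of `a :: l`. -/
lemma foldr_min_mem (a : ℤ) : ∀ l : List ℤ, l.foldr min a ∈ a :: l := by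
  intro l
  induction l with
  | nil => simp
  | cons b l ih =>
    simp only [List.foldr_cons]
    rcases min_choice b (l.foldr min a) with h | h
    · rw [h]; simp
    · rw [h]
      rcases List.mem_cons.mp ih with h' | h'
      · simp [h']
      · simp [h']

/-- The planar binary tree `φ(I)` associated to a list `I` of (distinct) integers:
`φ` of the empty list is the empty tree `|`, and `φ(I) = φ(I₁) ∨ φ(I₂)` where
`I = I₁ · (min I) · I₂` is the splitting of `I` at its minimal entry. -/
def phi : List ℤ → Tree Unit
  | [] => Tree.nil
  | a :: l =>
    Tree.node ()
      (phi ((a :: l).take ((a :: l).idxOf (l.foldr min a))))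
      (phi ((a :: l).drop ((a :: l).idxOf (l.foldr min a) + 1)))
termination_by l => l.length
decreasing_by
  · have hm := foldr_min_mem a l
    have hk := List.idxOf_lt_length_iff.mpr hm
    simp only [List.length_take, List.length_cons, List.foldr_attach] at *
    omega
  · simp only [List.length_drop, List.length_cons]
    omega

/-- The standardization of a list `I` of distinct integers: the list whose `j`-th entry is
the (1-indexed) position of `I_j` in the increasing ordering of the entries of `I`. -/
def stdz (I : List ℤ) : List ℤ :=
  I.map (fun x => ((I.filter (fun y => y < x)).length : ℤ) + 1)

/-- `l` is (the list of values of) a permutation of `{1, …, n}`. -/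
def IsPermList (n : ℕ) (l : List ℤ) : Prop :=
  l.Perm ((List.range n).map (fun k => (k : ℤ) + 1))

/-- `S_T`: the set of permutations `σ ∈ S_{|T|}` (identified with their lists of values
`(σ(1),…,σ(n))`) such that `φ(σ) = T`. -/
def STree (T : Tree Unit) : Set (List ℤ) :=
  {l | IsPermList T.numNodes l ∧ phi l = T}

/-- The descent set of a permutation `σ ∈ S_n` (identified with its list of values,
1-indexed): `D_σ = {i ∈ {1,…,n−1} : σ(i) > σ(i+1)}`. -/
def descentSet (l : List ℤ) : Set ℕ :=
  {i | 1 ≤ i ∧ ∃ a b, l[i - 1]? = some a ∧ l[i]? = some b ∧ b < a}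

lemma foldr_min_le {α : Type*} [LinearOrder α] (a : α) (l : List α) :
    ∀ x ∈ a :: l, l.foldr min a ≤ x := by
  induction l with
  | nil => simp
  | cons b l ih =>
    simp only [List.mem_cons, List.foldr_cons, forall_eq_or_imp, min_le_iff] at ih ⊢
    grind

lemma List.Nodup.lt_of_forall_le {α : Type*} [PartialOrder α] {A B : List α} {m x : α}
    (hl : (A ++ m :: B).Nodup) (hm : ∀ y ∈ A ++ m :: B, m ≤ y) (hx : x ∈ A ++ B) : m < x := by
  refine (hm x ?_).lt_of_ne ?_
  · exact List.mem_append.mpr ((List.mem_append.mp hx).imp_right (List.mem_cons_of_mem m))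
  · rintro rfl
    exact (List.nodup_cons.mp (List.nodup_middle.mp hl)).1 hx

lemma List.take_idxOf_append_cons_drop {α : Type*} [BEq α] [LawfulBEq α] {l : List α} {x : α}
    (hx : x ∈ l) : l.take (l.idxOf x) ++ x :: l.drop (l.idxOf x + 1) = l := by
  have hlt := List.idxOf_lt_length_of_mem hx
  nth_rw 2 [← List.getElem_idxOf hlt]
  rw [← List.drop_eq_getElem_cons hlt, List.take_append_drop]

lemma numNodes_phi (l : List ℤ) : BinaryTree.numNodes (phi l) = l.length := by
  induction l using phi.induct with
  | case1 => simp [phi, BinaryTree.numNodes]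
  | case2 a l ihA ihB =>
    simp only [List.foldr_attach] at ihA ihB
    conv_rhs => rw [← List.take_idxOf_append_cons_drop (foldr_min_mem a l)]
    rw [phi]
    simp only [BinaryTree.numNodes, ihA, ihB, List.length_append, List.length_cons]
    ring

@[simp]
lemma descentSet_nil : descentSet [] = ∅ := by
  simp [descentSet]

@[simp]
lemma descentSet_singleton (a : ℤ) : descentSet [a] = ∅ := by
  ext (_ | _ | i) <;> simp [descentSet]

lemma descentSet_cons (a : ℤ) (l : List ℤ) :
    descentSet (a :: l) = {i | i = 1 ∧ ∃ b ∈ l.head?, b < a} ∪ (· + 1) '' descentSet l := by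
  ext (_ | _ | i) <;> simp [descentSet, List.head?_eq_getElem?]

lemma descentSet_cons_of_forall_lt {a : ℤ} {l : List ℤ} (h : ∀ x ∈ l, a < x) :
    descentSet (a :: l) = (· + 1) '' descentSet l := by
  rw [descentSet_cons, Set.union_eq_right.mpr]
  rintro _ ⟨-, b, hb, hba⟩
  exact absurd (h b (List.mem_of_mem_head? hb)) (not_lt.mpr hba.le)

lemma descentSet_append_cons (l₁ : List ℤ) (x : ℤ) (l₂ : List ℤ) :
    descentSet (l₁ ++ x :: l₂) =
      descentSet (l₁ ++ [x]) ∪ (· + l₁.length) '' descentSet (x :: l₂) := by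
  induction l₁ with
  | nil => simp
  | cons a l₁ ih =>
    have hhead : (l₁ ++ x :: l₂).head? = (l₁ ++ [x]).head? := by cases l₁ <;> rfl
    rw [List.cons_append, List.cons_append, descentSet_cons, descentSet_cons, ih, hhead,
      Set.image_union, Set.image_image, Set.union_assoc, List.length_cons]
    simp only [add_assoc]

lemma descentSet_append_singleton_of_forall_lt {l : List ℤ} {m : ℤ} (h : ∀ x ∈ l, m < x) :
    descentSet (l ++ [m]) = descentSet l ∪ {l.length} \ {0} := by
  ext i
  simp only [descentSet, Set.mem_union, Set.mem_ofPred_eq, Set.mem_sdiff, Set.mem_singleton_iff,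
    List.getElem?_append]
  rcases lt_trichotomy i l.length with hi | rfl | hi
  · simp [hi, show i - 1 < l.length by omega, hi.ne]
  · rcases Nat.eq_zero_or_pos l.length with h0 | h0
    · simp [h0]
    · have hlast : l.length - 1 < l.length := by omega
      simp only [hlast, if_true, lt_irrefl, if_false, Nat.sub_self, List.getElem?_singleton,
        List.getElem?_eq_getElem hlast]
      simpa [h0.ne', Nat.one_le_iff_ne_zero] using h _ (List.getElem_mem hlast)
  · simp [show ¬ i < l.length by omega, show ¬ i - 1 < l.length by omega, hi.ne',
      List.getElem?_singleton, show i - l.length ≠ 0 by omega]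

lemma descentSet_append_cons_of_forall_lt {A B : List ℤ} {m : ℤ} (hA : ∀ x ∈ A, m < x)
    (hB : ∀ x ∈ B, m < x) :
    descentSet (A ++ m :: B) =
      descentSet A ∪ {A.length} \ {0} ∪ (· + (A.length + 1)) '' descentSet B := by
  rw [descentSet_append_cons, descentSet_append_singleton_of_forall_lt hA,
    descentSet_cons_of_forall_lt hB, Set.image_image]
  simp only [add_right_comm _ 1, add_assoc]

def treeDescents : BinaryTree Unit → Set ℕ
  | .nil => ∅
  | .node _ L R =>
      treeDescents L ∪ {L.numNodes} \ {0} ∪ (· + (L.numNodes + 1)) '' treeDescents R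

lemma descentSet_eq_treeDescents_phi {l : List ℤ} (hl : l.Nodup) :
    descentSet l = treeDescents (phi l) := by
  induction l using phi.induct with
  | case1 => simp [phi, treeDescents]
  | case2 a l ihA ihB =>
    simp only [List.foldr_attach] at ihA ihB
    set m := l.foldr min a
    set A := (a :: l).take ((a :: l).idxOf m)
    set B := (a :: l).drop ((a :: l).idxOf m + 1)
    have hphi : phi (a :: l) = BinaryTree.node () (phi A) (phi B) := by rw [phi]
    have hsplit : A ++ m :: B = a :: l := List.take_idxOf_append_cons_drop (foldr_min_mem a l)
    have hle : ∀ x ∈ A ++ m :: B, m ≤ x := hsplit ▸ foldr_min_le a l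
    rw [← hsplit] at hl
    have hAB : (A ++ B).Nodup := (List.nodup_cons.mp (List.nodup_middle.mp hl)).2
    have hmin : ∀ x ∈ A ++ B, m < x := fun x hx => hl.lt_of_forall_le hle hx
    rw [hphi, ← hsplit, descentSet_append_cons_of_forall_lt
      (fun x hx => hmin x (List.mem_append_left B hx))
      (fun x hx => hmin x (List.mem_append_right A hx)),
      treeDescents, numNodes_phi, ihA hAB.of_append_left, ihB hAB.of_append_right]

lemma IsPermList.nodup {n : ℕ} {l : List ℤ} (h : IsPermList n l) : l.Nodup := by
  refine h.nodup_iff.mpr ?_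
  simp only [bind_pure_comp, List.map_eq_map, List.map_map]
  exact List.nodup_range.map fun _ _ h => by simpa using h

/-- Any two permutations associated to the same tree have the same descent set. -/
theorem descentSet_eq_of_mem_STree (T : Tree Unit) (σ τ : List ℤ)
    (hσ : σ ∈ STree T) (hτ : τ ∈ STree T) :
    descentSet σ = descentSet τ := by
  rw [descentSet_eq_treeDescents_phi (IsPermList.nodup hσ.1),
    descentSet_eq_treeDescents_phi (IsPermList.nodup hτ.1), hσ.2, hτ.2]
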